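/- arXiv:1501.01882 — 3 statements merged into one kernel-verified Lean document; each statement's English description precedes it below -/
import Mathlib

section
/- (Aubin–Nitsche for Wentzell boundary conditions.) Assume the H²-regularity condition: for all g_Ω ∈ L²(Ω), g_Γ ∈ H^{1/2}(Γ), the weak solution φ of −Δφ = g_Ω in Ω, ∂_ν φ + κφ = g_Γ on Γ is in H²(Ω) with ‖φ‖²_{H²(Ω)} ≤ C₂(‖g_Ω‖²_{L²(Ω)} + ‖g_Γ‖²_{H^{1/2}(Γ)}). Assume also the first-order energy-norm Ritz error bound ‖w − R_h w‖ ≤ C h ‖w‖_{H²(Ω)}. Then the Ritz projection for the bilinear form a(u,v) = ∫_Ω ∇u·∇v + κ∫_Γ(γu)(γv), κ > 0, satisfies ‖u − R_h u‖²_{L²(Ω)} + μ‖γ(u − R_h u)‖²_{H^{-1/2}(Γ)} ≤ C h⁴ ‖u‖²_{H²(Ω)} for all u ∈ H²(Ω). -/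
/-!
Aubin–Nitsche duality. Let `e = u - R_h u`, let `X = ‖e‖²_{L²} + μ‖γe‖²_{H^{-1/2}}`, and let `φ`
solve the dual problem with datum `e`. Testing it with `e` and using Galerkin orthogonality
gives `X = a(e, φ - R_h φ)`, so Cauchy–Schwarz in the energy norm and the first-order bound
applied to both `u` and `φ` give `X ≤ (C₁h)² ‖u‖_{H²} ‖φ‖_{H²}`. Regularity bounds `‖φ‖²_{H²}`
by a multiple of `X`, and absorbing `X` yields `X ≤ C h⁴ ‖u‖²_{H²}`.
-/

namespace LinearMap.BilinForm

lemma apply_le_sqrt_mul_sqrt {V : Type*} [AddCommGroup V] [Module ℝ V]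
    (B : LinearMap.BilinForm ℝ V) (hs : ∀ x, 0 ≤ B x x) (hB : ∀ x y, B x y = B y x) (x y : V) :
    B x y ≤ √(B x x) * √(B y y) := by
  rw [← Real.sqrt_mul (hs x)]
  refine Real.le_sqrt_of_sq_le ?_
  simpa only [sq, hB y x] using B.apply_mul_apply_le_of_forall_zero_le hs x y

end LinearMap.BilinForm

section Galerkin

variable {V : Type*} [AddCommGroup V] [Module ℝ V] {a : V →ₗ[ℝ] V →ₗ[ℝ] ℝ}
  {Vh : Submodule ℝ V} {Rh : V → V}

lemma galerkin_orthogonality (hRitz : ∀ w, Rh w ∈ Vh ∧ ∀ vh ∈ Vh, a (Rh w) vh = a w vh)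
    (u : V) {vh : V} (hvh : vh ∈ Vh) : a (u - Rh u) vh = 0 := by
  rw [map_sub, LinearMap.sub_apply, (hRitz u).2 vh hvh, sub_self]

lemma apply_sub_ritz_sub_ritz (hRitz : ∀ w, Rh w ∈ Vh ∧ ∀ vh ∈ Vh, a (Rh w) vh = a w vh)
    (u φ : V) : a (u - Rh u) (φ - Rh φ) = a (u - Rh u) φ := by
  rw [map_sub, galerkin_orthogonality hRitz u (hRitz φ).1, sub_zero]

end Galerkin

lemma le_sq_mul_of_le_mul_of_sq_le_mul {x a b c : ℝ} (hc : 0 ≤ c) (hab : x ≤ a * b)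
    (hb : b ^ 2 ≤ c * x) : x ≤ a ^ 2 * c := by
  rcases lt_or_ge 0 x with hx | hx
  · have hsq : x * x ≤ (a ^ 2 * c) * x :=
      calc x * x ≤ (a * b) ^ 2 := by nlinarith
        _ = a ^ 2 * b ^ 2 := by ring
        _ ≤ a ^ 2 * (c * x) := by gcongr
        _ = (a ^ 2 * c) * x := by ring
    exact le_of_mul_le_mul_right hsq hx
  · exact hx.trans (by positivity)

lemma add_sq_mul_le_max_one_mul {p q μ : ℝ} (hp : 0 ≤ p) (hq : 0 ≤ q) (hμ : 0 ≤ μ) :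
    p + μ ^ 2 * q ≤ max 1 μ * (p + μ * q) := by
  have h₁ : p ≤ max 1 μ * p := le_mul_of_one_le_left hp (le_max_left 1 μ)
  have h₂ : μ * (μ * q) ≤ max 1 μ * (μ * q) := by gcongr; exact le_max_right 1 μ
  linarith

theorem ritz_second_order_wentzell_general
    {V : Type*} [AddCommGroup V] [Module ℝ V]
    (a LΩ Sm : V →ₗ[ℝ] V →ₗ[ℝ] ℝ)
    (ha_symm : ∀ v w, a v w = a w v) (ha_pos : ∀ v, 0 ≤ a v v)
    (hLΩ_pos : ∀ v, 0 ≤ LΩ v v)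
    (hSm_pos : ∀ v, 0 ≤ Sm v v)
    (μ C₁ C₂ : ℝ) (hμ : 0 < μ) (hC₁ : 0 < C₁) (hC₂ : 0 < C₂)
    (nH2 : V → ℝ)
    -- the `H²`-regularity condition for the dual problem
    (hreg : ∀ g : V, ∃ φ : V,
      (∀ v : V, a φ v = LΩ g v + μ * Sm g v) ∧
      (nH2 φ) ^ 2 ≤ C₂ * (LΩ g g + μ ^ 2 * Sm g g)) :
    ∃ C' > 0, ∀ h > (0:ℝ), ∀ (Vh : Submodule ℝ V) (Rh : V → V),
      -- `R_h` is the Ritz projection onto `V_h` (Galerkin orthogonality)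
      (∀ w, Rh w ∈ Vh ∧ ∀ vh ∈ Vh, a (Rh w) vh = a w vh) →
      -- first-order Ritz error bound in the energy norm
      (∀ w : V, Real.sqrt (a (w - Rh w) (w - Rh w)) ≤ C₁ * h * nH2 w) →
      ∀ u : V,
        LΩ (u - Rh u) (u - Rh u) + μ * Sm (u - Rh u) (u - Rh u) ≤
          C' * h ^ 4 * (nH2 u) ^ 2 := by
  refine ⟨C₁ ^ 4 * C₂ * max 1 μ, by positivity, fun h _ Vh Rh hRitz hErr u => ?_⟩
  set e := u - Rh u
  set X := LΩ e e + μ * Sm e e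
  obtain ⟨φ, hφ, hφH2⟩ := hreg e
  have hdual : X ≤ (C₁ * h * nH2 u) * (C₁ * h * nH2 φ) :=
    calc X = a e (φ - Rh φ) := by rw [apply_sub_ritz_sub_ritz hRitz, ha_symm, hφ]
      _ ≤ √(a e e) * √(a (φ - Rh φ) (φ - Rh φ)) :=
          LinearMap.BilinForm.apply_le_sqrt_mul_sqrt a ha_pos ha_symm _ _
      _ ≤ (C₁ * h * nH2 u) * (C₁ * h * nH2 φ) :=
          mul_le_mul (hErr u) (hErr φ) (Real.sqrt_nonneg _) ((Real.sqrt_nonneg _).trans (hErr u))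
  have hφX : (C₁ * h * nH2 φ) ^ 2 ≤ (C₁ ^ 2 * h ^ 2 * C₂ * max 1 μ) * X :=
    calc (C₁ * h * nH2 φ) ^ 2 = C₁ ^ 2 * h ^ 2 * nH2 φ ^ 2 := by ring
      _ ≤ C₁ ^ 2 * h ^ 2 * (C₂ * (max 1 μ * X)) := by
          gcongr
          exact hφH2.trans <| by
            gcongr; exact add_sq_mul_le_max_one_mul (hLΩ_pos e) (hSm_pos e) hμ.le
      _ = (C₁ ^ 2 * h ^ 2 * C₂ * max 1 μ) * X := by ring
  calc X ≤ (C₁ * h * nH2 u) ^ 2 * (C₁ ^ 2 * h ^ 2 * C₂ * max 1 μ) :=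
        le_sq_mul_of_le_mul_of_sq_le_mul (by positivity) hdual hφX
    _ = C₁ ^ 4 * C₂ * max 1 μ * h ^ 4 * nH2 u ^ 2 := by ring

/-- Aubin–Nitsche duality argument for the Ritz projection with Wentzell boundary
conditions.  Here `V` plays the role of `H¹(Ω)`, `a` is the elliptic form
`a(u,v) = ∫_Ω ∇u·∇v + κ∫_Γ (γu)(γv)`, `LΩ` is the `L²(Ω)` inner product,
`Sm` the `H^{-1/2}(Γ)` pairing `(γu, γv)_{H^{-1/2}(Γ)}`, and `nH2` the `H²(Ω)`
norm.  The `H²`-regularity condition is expressed in the form used in the proof: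
for every `g` the dual problem `a(φ,v) = (g,v)_{L²(Ω)} + μ(γg, γv)_{H^{-1/2}(Γ)}`
has a solution `φ` with `‖φ‖²_{H²(Ω)} ≤ C₂(‖g‖²_{L²(Ω)} + μ²‖γg‖²_{H^{-1/2}(Γ)})`.
Conclusion: `‖u − R_h u‖²_{L²(Ω)} + μ‖γ(u − R_h u)‖²_{H^{-1/2}(Γ)} ≤ C' h⁴ ‖u‖²_{H²(Ω)}`. -/
theorem ritz_second_order_wentzell
    {V : Type*} [AddCommGroup V] [Module ℝ V]
    (a LΩ Sm : V →ₗ[ℝ] V →ₗ[ℝ] ℝ)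
    (ha_symm : ∀ v w, a v w = a w v) (ha_pos : ∀ v, 0 ≤ a v v)
    (hLΩ_symm : ∀ v w, LΩ v w = LΩ w v) (hLΩ_pos : ∀ v, 0 ≤ LΩ v v)
    (hSm_symm : ∀ v w, Sm v w = Sm w v) (hSm_pos : ∀ v, 0 ≤ Sm v v)
    (κ μ C₁ C₂ : ℝ) (hκ : 0 < κ) (hμ : 0 < μ) (hC₁ : 0 < C₁) (hC₂ : 0 < C₂)
    (nH2 : V → ℝ)
    -- the `H²`-regularity condition for the dual problem
    (hreg : ∀ g : V, ∃ φ : V,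
      (∀ v : V, a φ v = LΩ g v + μ * Sm g v) ∧
      (nH2 φ) ^ 2 ≤ C₂ * (LΩ g g + μ ^ 2 * Sm g g)) :
    ∃ C' > 0, ∀ h > (0:ℝ), ∀ (Vh : Submodule ℝ V) (Rh : V → V),
      -- `R_h` is the Ritz projection onto `V_h` (Galerkin orthogonality)
      (∀ w, Rh w ∈ Vh ∧ ∀ vh ∈ Vh, a (Rh w) vh = a w vh) →
      -- first-order Ritz error bound in the energy norm
      (∀ w : V, Real.sqrt (a (w - Rh w) (w - Rh w)) ≤ C₁ * h * nH2 w) →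
      ∀ u : V,
        LΩ (u - Rh u) (u - Rh u) + μ * Sm (u - Rh u) (u - Rh u) ≤
          C' * h ^ 4 * (nH2 u) ^ 2 :=
  ritz_second_order_wentzell_general a LΩ Sm ha_symm ha_pos hLΩ_pos hSm_pos μ C₁ C₂ hμ hC₁ hC₂ nH2
    hreg
end

section
/- (Duality argument for β > 0.) Assume the H²-regularity condition for the bulk-surface elliptic problem −Δφ = g_Ω in Ω, ∂_ν φ − βΔ_Γ φ + κφ = g_Γ on Γ (β, κ > 0): ‖φ‖²_{H²(Ω)} + ‖γφ‖²_{H²(Γ)} ≤ C₂(‖g_Ω‖²_{L²(Ω)} + ‖g_Γ‖²_{L²(Γ)}), and the first-order energy-norm Ritz error bound. Then the Ritz projection satisfies ‖u − R_h u‖²_{L²(Ω)} + μ‖γ(u − R_h u)‖²_{L²(Γ)} ≤ C h⁴ (‖u‖²_{H²(Ω)} + ‖γu‖²_{H²(Γ)}) for all u ∈ H²(Ω) with γu ∈ H²(Γ). -/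
/-!
Aubin–Nitsche duality. Let `e = u − R_h u` and `E = ‖e‖²_{L²(Ω)} + μ‖γe‖²_{L²(Γ)}`, and let `φ` solve
the dual problem with data `e`, so that `E = a(φ, e)`. Galerkin orthogonality lets us replace `φ`
by `φ − R_h φ`, and Cauchy–Schwarz for `a` gives `E² ≤ a(φ − R_h φ, φ − R_h φ) · a(e, e)`. Both
factors are `O(h²)` by the energy estimate, the first one times `‖φ‖_{H²}² ≲ E` by regularity;
dividing by `E` leaves `E = O(h⁴)`.
-/

section Ritz

variable {V : Type*} [AddCommGroup V] [Module ℝ V]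

def IsRitzProjection (a : V →ₗ[ℝ] V →ₗ[ℝ] ℝ) (Vh : Submodule ℝ V) (Rh : V → V) : Prop :=
  ∀ w, Rh w ∈ Vh ∧ ∀ vh ∈ Vh, a (Rh w) vh = a w vh

namespace IsRitzProjection

variable {a : V →ₗ[ℝ] V →ₗ[ℝ] ℝ} {Vh : Submodule ℝ V} {Rh : V → V}

lemma apply_sub_eq_zero (hRitz : IsRitzProjection a Vh Rh) (u : V) {vh : V} (hvh : vh ∈ Vh) :
    a (u - Rh u) vh = 0 := by
  rw [LinearMap.map_sub₂, (hRitz u).2 vh hvh, sub_self]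

lemma sq_apply_error_le (hRitz : IsRitzProjection a Vh Rh) (ha_symm : ∀ v w, a v w = a w v)
    (ha_pos : ∀ v, 0 ≤ a v v) (φ u : V) :
    a φ (u - Rh u) ^ 2 ≤ a (φ - Rh φ) (φ - Rh φ) * a (u - Rh u) (u - Rh u) := by
  have hφ : a φ (u - Rh u) = a (φ - Rh φ) (u - Rh u) := by
    rw [LinearMap.map_sub₂, ha_symm (Rh φ), hRitz.apply_sub_eq_zero u (hRitz φ).1, sub_zero]
  rw [hφ, sq]
  nth_rewrite 2 [ha_symm]
  exact LinearMap.BilinForm.apply_mul_apply_le_of_forall_zero_le a ha_pos _ _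

end IsRitzProjection

end Ritz

lemma le_two_mul_sq_mul_of_sqrt_le {q c x y : ℝ} (hq : √q ≤ c * (x + y)) :
    q ≤ 2 * c ^ 2 * (x ^ 2 + y ^ 2) :=
  calc q ≤ (c * (x + y)) ^ 2 := (Real.sqrt_le_iff.1 hq).2
    _ = c ^ 2 * (x + y) ^ 2 := by ring
    _ ≤ c ^ 2 * (2 * (x ^ 2 + y ^ 2)) := by gcongr; exact add_sq_le
    _ = 2 * c ^ 2 * (x ^ 2 + y ^ 2) := by ring

lemma add_sq_mul_le_max_mul {A B μ : ℝ} (hA : 0 ≤ A) (hB : 0 ≤ B) (hμ : 0 ≤ μ) :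
    A + μ ^ 2 * B ≤ max 1 μ * (A + μ * B) := by
  have h1 : 1 ≤ max 1 μ := le_max_left _ _
  have hμM : μ ≤ max 1 μ := le_max_right _ _
  nlinarith [mul_le_mul_of_nonneg_right hμM (mul_nonneg hμ hB)]

lemma le_of_sq_le_mul {E X : ℝ} (hX : 0 ≤ X) (h : E ^ 2 ≤ E * X) : E ≤ X := by
  nlinarith

/-- `a` is the bulk–surface energy form, `LΩ` the `L²(Ω)` inner product, `LΓ` the pairing
`(γu, γv)_{L²(Γ)}`, and `nH2`, `nH2Γ` the `H²(Ω)` and `H²(Γ)` norms. -/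
theorem ritz_second_order_bulk_surface_general
    {V : Type*} [AddCommGroup V] [Module ℝ V]
    (a LΩ LΓ : V →ₗ[ℝ] V →ₗ[ℝ] ℝ)
    (ha_symm : ∀ v w, a v w = a w v) (ha_pos : ∀ v, 0 ≤ a v v)
    (hLΩ_pos : ∀ v, 0 ≤ LΩ v v)
    (hLΓ_pos : ∀ v, 0 ≤ LΓ v v)
    (μ C₁ C₂ : ℝ) (hμ : 0 < μ)
    (hC₁ : 0 < C₁) (hC₂ : 0 < C₂)
    (nH2 nH2Γ : V → ℝ)
    -- the `H²`-regularity condition for the bulk–surface dual problem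
    (hreg : ∀ g : V, ∃ φ : V,
      (∀ v : V, a φ v = LΩ g v + μ * LΓ g v) ∧
      (nH2 φ) ^ 2 + (nH2Γ φ) ^ 2 ≤ C₂ * (LΩ g g + μ ^ 2 * LΓ g g)) :
    ∃ C' > 0, ∀ h > (0:ℝ), ∀ (Vh : Submodule ℝ V) (Rh : V → V),
      -- `R_h` is the Ritz projection onto `V_h` (Galerkin orthogonality)
      (∀ w, Rh w ∈ Vh ∧ ∀ vh ∈ Vh, a (Rh w) vh = a w vh) →
      -- first-order Ritz error bound in the energy norm
      (∀ w : V, Real.sqrt (a (w - Rh w) (w - Rh w)) ≤ C₁ * h * (nH2 w + nH2Γ w)) →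
      ∀ u : V,
        LΩ (u - Rh u) (u - Rh u) + μ * LΓ (u - Rh u) (u - Rh u) ≤
          C' * h ^ 4 * ((nH2 u) ^ 2 + (nH2Γ u) ^ 2) := by
  refine ⟨4 * C₂ * max 1 μ * C₁ ^ 4, by positivity, fun h _ Vh Rh hRitz hEnergy u => ?_⟩
  set e := u - Rh u
  set E := LΩ e e + μ * LΓ e e
  obtain ⟨φ, hφ, hφ_reg⟩ := hreg e
  have hφ_reg' : nH2 φ ^ 2 + nH2Γ φ ^ 2 ≤ C₂ * (max 1 μ * E) :=
    hφ_reg.trans (by gcongr; exact add_sq_mul_le_max_mul (hLΩ_pos e) (hLΓ_pos e) hμ.le)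
  have hφ_energy : a (φ - Rh φ) (φ - Rh φ) ≤ 2 * (C₁ * h) ^ 2 * (C₂ * (max 1 μ * E)) :=
    (le_two_mul_sq_mul_of_sqrt_le (hEnergy φ)).trans (by gcongr)
  have hu_energy := le_two_mul_sq_mul_of_sqrt_le (hEnergy u)
  refine le_of_sq_le_mul (by positivity) ?_
  calc E ^ 2 = a φ e ^ 2 := by rw [hφ e]
    _ ≤ a (φ - Rh φ) (φ - Rh φ) * a e e :=
        IsRitzProjection.sq_apply_error_le hRitz ha_symm ha_pos φ u
    _ ≤ (2 * (C₁ * h) ^ 2 * (C₂ * (max 1 μ * E))) *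
          (2 * (C₁ * h) ^ 2 * (nH2 u ^ 2 + nH2Γ u ^ 2)) :=
        mul_le_mul hφ_energy hu_energy (ha_pos e) ((ha_pos _).trans hφ_energy)
    _ = E * (4 * C₂ * max 1 μ * C₁ ^ 4 * h ^ 4 * (nH2 u ^ 2 + nH2Γ u ^ 2)) := by ring

/-- Aubin–Nitsche duality argument for the Ritz projection in the bulk–surface
diffusion case `β > 0`.  Here `a(u,v) = ∫_Ω ∇u·∇v + κ∫_Γ(γu)(γv) + β∫_Γ ∇_Γu·∇_Γv`,
`LΩ` is the `L²(Ω)` inner product, `LΓ` the boundary `L²(Γ)` pairing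
`(γu, γv)_{L²(Γ)}`, and `nH2`, `nH2Γ` the `H²(Ω)` and `H²(Γ)` norms.
`H²`-regularity: for every `g` the dual problem `a(φ,v) = (g,v)_{L²(Ω)} + μ(γg,γv)_{L²(Γ)}`
has a solution `φ` with `‖φ‖²_{H²(Ω)} + ‖γφ‖²_{H²(Γ)} ≤ C₂(‖g‖²_{L²(Ω)} + μ²‖γg‖²_{L²(Γ)})`.
Conclusion: `‖u − R_h u‖²_{L²(Ω)} + μ‖γ(u − R_h u)‖²_{L²(Γ)} ≤ C' h⁴ (‖u‖²_{H²(Ω)} + ‖γu‖²_{H²(Γ)})`. -/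
theorem ritz_second_order_bulk_surface
    {V : Type*} [AddCommGroup V] [Module ℝ V]
    (a LΩ LΓ : V →ₗ[ℝ] V →ₗ[ℝ] ℝ)
    (ha_symm : ∀ v w, a v w = a w v) (ha_pos : ∀ v, 0 ≤ a v v)
    (hLΩ_symm : ∀ v w, LΩ v w = LΩ w v) (hLΩ_pos : ∀ v, 0 ≤ LΩ v v)
    (hLΓ_symm : ∀ v w, LΓ v w = LΓ w v) (hLΓ_pos : ∀ v, 0 ≤ LΓ v v)
    (β κ μ C₁ C₂ : ℝ) (hβ : 0 < β) (hκ : 0 < κ) (hμ : 0 < μ)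
    (hC₁ : 0 < C₁) (hC₂ : 0 < C₂)
    (nH2 nH2Γ : V → ℝ)
    -- the `H²`-regularity condition for the bulk–surface dual problem
    (hreg : ∀ g : V, ∃ φ : V,
      (∀ v : V, a φ v = LΩ g v + μ * LΓ g v) ∧
      (nH2 φ) ^ 2 + (nH2Γ φ) ^ 2 ≤ C₂ * (LΩ g g + μ ^ 2 * LΓ g g)) :
    ∃ C' > 0, ∀ h > (0:ℝ), ∀ (Vh : Submodule ℝ V) (Rh : V → V),
      -- `R_h` is the Ritz projection onto `V_h` (Galerkin orthogonality)
      (∀ w, Rh w ∈ Vh ∧ ∀ vh ∈ Vh, a (Rh w) vh = a w vh) →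
      -- first-order Ritz error bound in the energy norm
      (∀ w : V, Real.sqrt (a (w - Rh w) (w - Rh w)) ≤ C₁ * h * (nH2 w + nH2Γ w)) →
      ∀ u : V,
        LΩ (u - Rh u) (u - Rh u) + μ * LΓ (u - Rh u) (u - Rh u) ≤
          C' * h ^ 4 * ((nH2 u) ^ 2 + (nH2Γ u) ^ 2) :=
  ritz_second_order_bulk_surface_general a LΩ LΓ ha_symm ha_pos hLΩ_pos hLΓ_pos μ C₁ C₂ hμ hC₁ hC₂
    nH2 nH2Γ hreg
end

section
/- Let A₀₀ ∈ ℝ^{n×n}, A₁₁ ∈ ℝ^{m×m} be symmetric positive definite, A₀₁ ∈ ℝ^{n×m}, A₁₀ = A₀₁ᵀ, with ‖A₀₀^{-1/2}A₀₁A₁₁^{-1/2}‖₂ ≤ 1. Set X = A₁₁^{-1/2}A₀₁ᵀA₀₀^{-1/2}(I − e^{−τA₀₀})^{1/2} for τ > 0 (so Xᵀ = (I − e^{−τA₀₀})^{1/2}A₀₀^{-1/2}A₀₁A₁₁^{-1/2}). Then the symmetric matrix S̃ = [[e^{−τA₀₀} + Xᵀ(I − e^{−τA₁₁})X, −Xᵀ(I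 − e^{−τA₁₁})^{1/2}e^{−τA₁₁/2}], [−e^{−τA₁₁/2}(I − e^{−τA₁₁})^{1/2}X, e^{−τA₁₁}]] satisfies ‖S̃‖₂ ≤ 1. -/
/-!
Write `E₀ = e^{−τA₀₀}`, `E₁ = e^{−τA₁₁}`, `H = e^{−τA₁₁/2}` and `S = (I − E₁)^{1/2}`.
Then `S̃ = diag(E₀, 0) + KᵀK` with `K = [−SX, H]`, so `S̃ ≥ 0`. Since `H` commutes with `S`,
also `I − S̃ = diag(I − E₀ − XᵀX, 0) + JᵀJ` with `J = [HX, S]`, and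
`I − E₀ − XᵀX = S₀₀ (I − YYᵀ) S₀₀ ≥ 0` for `S₀₀ = (I − E₀)^{1/2}` and
`Y = A₀₀^{-1/2}A₀₁A₁₁^{-1/2}`, because `‖Y‖₂ ≤ 1`. A symmetric matrix with `0 ≤ S̃ ≤ I`
has spectral norm at most `1`.
-/

open Matrix

/-- The spectral norm (`ℓ² → ℓ²` operator norm) of a real matrix. -/
noncomputable def matrixSpectralNorm {m n : Type*} [Fintype m] [Fintype n] [DecidableEq n]
    (A : Matrix m n ℝ) : ℝ :=
  ‖(Matrix.toEuclideanLin A).toContinuousLinearMap‖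

open scoped Matrix.Norms.L2Operator MatrixOrder ComplexOrder

namespace Matrix

theorem PosSemidef.transpose_eq {n : Type*} {A : Matrix n n ℝ} (hA : A.PosSemidef) : Aᵀ = A :=
  hA.isHermitian.eq

section RCLike

variable {𝕜 : Type*} [RCLike 𝕜] {m n : Type*} [Fintype m] [Fintype n] [DecidableEq n]

theorem PosSemidef.commute_of_commute_mul_self {S B : Matrix n n 𝕜} (hS : S.PosSemidef)
    (hB : Commute B (S * S)) : Commute B S := by
  rw [← CFC.sqrt_mul_self S hS.nonneg, CFC.sqrt_eq_cfc]
  exact (hB.symm.cfc_nnreal _).symm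

theorem PosSemidef.fromBlocks_zero [DecidableEq m] {G : Matrix n n 𝕜} (hG : G.PosSemidef) :
    (fromBlocks G 0 0 (0 : Matrix m m 𝕜)).PosSemidef := by
  convert hG.conjTranspose_mul_mul_same (fromCols (1 : Matrix n n 𝕜) (0 : Matrix n m 𝕜)) using 1
  rw [conjTranspose_fromCols_eq_fromRows_conjTranspose, ← fromCols_fromRows_eq_fromBlocks]
  simp

end RCLike

variable {m n : Type*} [Fintype m] [Fintype n]

theorem posSemidef_transpose_mul_self (A : Matrix m n ℝ) : (Aᵀ * A).PosSemidef := by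
  simpa using posSemidef_conjTranspose_mul_self A

variable [DecidableEq n]

theorem exp_smul_mul_exp_smul (s t : ℝ) (A : Matrix n n ℝ) :
    NormedSpace.exp (s • A) * NormedSpace.exp (t • A) = NormedSpace.exp ((s + t) • A) := by
  rw [add_smul, exp_add_of_commute]
  exact ((Commute.refl A).smul_left s).smul_right t

theorem IsHermitian.posSemidef_exp_smul {A : Matrix n n ℝ} (hA : A.IsHermitian) (t : ℝ) :
    (NormedSpace.exp (t • A)).PosSemidef :=
  ((IsSelfAdjoint.all t).smul hA.isSelfAdjoint).exp_nonneg.posSemidef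

theorem PosSemidef.l2_opNorm_le_one_iff {A : Matrix n n ℝ} (hA : A.PosSemidef) :
    ‖A‖ ≤ 1 ↔ (1 - A).PosSemidef := by
  have hA' : IsSelfAdjoint A := hA.isHermitian
  calc ‖A‖ ≤ 1 ↔ ∀ x ∈ spectrum ℝ A, ‖x‖ ≤ 1 := by
        conv_lhs => rw [← cfc_id' ℝ A]
        exact norm_cfc_le_iff _ _ zero_le_one
    _ ↔ ∀ x ∈ spectrum ℝ A, x ≤ 1 := forall₂_congr fun x hx => by
        rw [Real.norm_of_nonneg (spectrum_nonneg_of_nonneg hA.nonneg hx)]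
    _ ↔ A ≤ algebraMap ℝ _ 1 := (le_algebraMap_iff_spectrum_le (ha := hA')).symm
    _ ↔ (1 - A).PosSemidef := by rw [map_one, ← sub_nonneg, nonneg_iff_posSemidef]

theorem posSemidef_one_sub_mul_transpose_self [DecidableEq m] {Y : Matrix n m ℝ}
    (hY : ‖Y‖ ≤ 1) : (1 - Y * Yᵀ).PosSemidef := by
  have hYY : (Y * Yᵀ).PosSemidef := by simpa using posSemidef_self_mul_conjTranspose Y
  refine hYY.l2_opNorm_le_one_iff.mp ?_
  have hnorm : ‖Y * Yᵀ‖ = ‖Y‖ * ‖Y‖ := by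
    have h := l2_opNorm_conjTranspose_mul_self Yᴴ
    rwa [conjTranspose_conjTranspose, l2_opNorm_conjTranspose,
      conjTranspose_eq_transpose_of_trivial] at h
  rw [hnorm]
  exact mul_le_one₀ hY (norm_nonneg Y) hY

theorem posSemidef_mul_self_sub_transpose_mul_self [DecidableEq m] {S : Matrix n n ℝ}
    {Y : Matrix n m ℝ} (hS : Sᵀ = S) (hY : ‖Y‖ ≤ 1) :
    (S * S - (Yᵀ * S)ᵀ * (Yᵀ * S)).PosSemidef := by
  convert (posSemidef_one_sub_mul_transpose_self hY).conjTranspose_mul_mul_same S using 1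
  rw [conjTranspose_eq_transpose_of_trivial, hS, transpose_mul, transpose_transpose, hS,
    Matrix.mul_sub, Matrix.sub_mul, Matrix.mul_one]
  simp only [Matrix.mul_assoc]

end Matrix

section splittingPropagator

variable {m n : Type*} [Fintype m] [DecidableEq m]

/-- `splittingPropagator E₀ E₁ H S X` is `S̃` with `H = e^{−τA₁₁/2}` and `S = (I − E₁)^{1/2}`. -/
noncomputable def splittingPropagator (E0 : Matrix n n ℝ) (E1 H S : Matrix m m ℝ)
    (X : Matrix m n ℝ) : Matrix (n ⊕ m) (n ⊕ m) ℝ :=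
  fromBlocks (E0 + Xᵀ * (1 - E1) * X) (-(Xᵀ * S * H)) (-(H * S * X)) E1

variable {E0 : Matrix n n ℝ} {E1 H S : Matrix m m ℝ} {X : Matrix m n ℝ}
  (hH : Hᵀ = H) (hH_sq : H * H = E1) (hS : Sᵀ = S) (hSS : S * S = 1 - E1)
include hH hH_sq hS hSS

theorem splittingPropagator_eq_fromBlocks_add_transpose_mul_self :
    splittingPropagator E0 E1 H S X =
      fromBlocks E0 0 0 0 + (fromCols (-(S * X)) H)ᵀ * fromCols (-(S * X)) H := by
  rw [transpose_fromCols, fromRows_mul_fromCols, fromBlocks_add, splittingPropagator]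
  simp only [transpose_neg, transpose_mul, hS, hH, hH_sq, Matrix.neg_mul, Matrix.mul_neg, neg_neg,
    ← hSS, Matrix.mul_assoc, zero_add]

theorem one_sub_splittingPropagator_eq [DecidableEq n] (hcomm : Commute H S) :
    1 - splittingPropagator E0 E1 H S X =
      fromBlocks (1 - E0 - Xᵀ * X) 0 0 0 + (fromCols (H * X) S)ᵀ * fromCols (H * X) S := by
  rw [transpose_fromCols, fromRows_mul_fromCols, fromBlocks_add, splittingPropagator,
    ← fromBlocks_one, sub_eq_add_neg, fromBlocks_neg, fromBlocks_add]
  simp only [transpose_mul, hS, hH, Matrix.mul_assoc, hcomm.eq, ← hH_sq, hSS, zero_add, neg_neg]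
  congr 1
  simp only [Matrix.mul_sub, Matrix.sub_mul, Matrix.one_mul, Matrix.mul_assoc]
  abel

theorem splittingPropagator_l2_opNorm_le_one [Fintype n] [DecidableEq n] (hcomm : Commute H S)
    (hE0 : E0.PosSemidef) (hX : (1 - E0 - Xᵀ * X).PosSemidef) :
    ‖splittingPropagator E0 E1 H S X‖ ≤ 1 := by
  have hM : (splittingPropagator E0 E1 H S X).PosSemidef := by
    rw [splittingPropagator_eq_fromBlocks_add_transpose_mul_self hH hH_sq hS hSS]
    exact hE0.fromBlocks_zero.add (posSemidef_transpose_mul_self _)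
  refine hM.l2_opNorm_le_one_iff.mpr ?_
  rw [one_sub_splittingPropagator_eq hH hH_sq hS hSS hcomm]
  exact hX.fromBlocks_zero.add (posSemidef_transpose_mul_self _)

end splittingPropagator

theorem symmetrized_splitting_propagator_norm_le_one_general {nn mm : ℕ}
    (A00 : Matrix (Fin nn) (Fin nn) ℝ) (A11 : Matrix (Fin mm) (Fin mm) ℝ)
    (A01 : Matrix (Fin nn) (Fin mm) ℝ)
    (hA00 : A00.PosDef) (hA11 : A11.PosDef)
    (τ : ℝ)
    (R00 : Matrix (Fin nn) (Fin nn) ℝ) (R11 : Matrix (Fin mm) (Fin mm) ℝ)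
    (hR00 : R00.PosSemidef)
    (hR11 : R11.PosSemidef)
    (S00 : Matrix (Fin nn) (Fin nn) ℝ) (S11 : Matrix (Fin mm) (Fin mm) ℝ)
    (hS00 : S00.PosSemidef) (hS00sq : S00 * S00 = 1 - NormedSpace.exp (-τ • A00))
    (hS11 : S11.PosSemidef) (hS11sq : S11 * S11 = 1 - NormedSpace.exp (-τ • A11))
    -- the spectral-norm condition `‖A₀₀^{-1/2} A₀₁ A₁₁^{-1/2}‖₂ ≤ 1`
    (hX1 : matrixSpectralNorm (R00 * A01 * R11) ≤ 1) :
    matrixSpectralNorm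
      (Matrix.fromBlocks
        (NormedSpace.exp (-τ • A00)
          + (R11 * A01ᵀ * R00 * S00)ᵀ * (1 - NormedSpace.exp (-τ • A11))
              * (R11 * A01ᵀ * R00 * S00))
        (-((R11 * A01ᵀ * R00 * S00)ᵀ * S11 * NormedSpace.exp (-(τ / 2) • A11)))
        (-(NormedSpace.exp (-(τ / 2) • A11) * S11 * (R11 * A01ᵀ * R00 * S00)))
        (NormedSpace.exp (-τ • A11))) ≤ 1 := by
  have hE1h : (NormedSpace.exp (-(τ / 2) • A11))ᵀ = NormedSpace.exp (-(τ / 2) • A11) :=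
    (hA11.isHermitian.posSemidef_exp_smul _).transpose_eq
  have hE1h_sq : NormedSpace.exp (-(τ / 2) • A11) * NormedSpace.exp (-(τ / 2) • A11)
      = NormedSpace.exp (-τ • A11) := by
    rw [exp_smul_mul_exp_smul]; congr 2; ring
  have hcomm : Commute (NormedSpace.exp (-(τ / 2) • A11)) S11 := by
    refine hS11.commute_of_commute_mul_self ?_
    rw [hS11sq]
    exact (Commute.one_right _).sub_right
      (((Commute.refl A11).smul_left _).smul_right _).exp
  have hX_eq : R11 * A01ᵀ * R00 * S00 = (R00 * A01 * R11)ᵀ * S00 := by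
    simp only [transpose_mul, hR00.transpose_eq, hR11.transpose_eq, Matrix.mul_assoc]
  refine splittingPropagator_l2_opNorm_le_one hE1h hE1h_sq hS11.transpose_eq hS11sq hcomm
    (hA00.isHermitian.posSemidef_exp_smul _) ?_
  rw [← hS00sq, hX_eq]
  exact posSemidef_mul_self_sub_transpose_mul_self hS00.transpose_eq hX1

/-- The symmetrized propagator `S̃` of the bulk–surface component splitting has
spectral norm at most `1`.  The square roots `(I − e^{−τA₀₀})^{1/2}`,
`(I − e^{−τA₁₁})^{1/2}`, `A₀₀^{-1/2}`, `A₁₁^{-1/2}` are given as positive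
semidefinite matrices `S00`, `S11`, `R00`, `R11` characterised by their squares,
and `X = A₁₁^{-1/2} A₀₁ᵀ A₀₀^{-1/2} (I − e^{−τA₀₀})^{1/2}`. -/
theorem symmetrized_splitting_propagator_norm_le_one {nn mm : ℕ}
    (A00 : Matrix (Fin nn) (Fin nn) ℝ) (A11 : Matrix (Fin mm) (Fin mm) ℝ)
    (A01 : Matrix (Fin nn) (Fin mm) ℝ)
    (hA00 : A00.PosDef) (hA11 : A11.PosDef)
    (τ : ℝ) (hτ : 0 < τ)
    (R00 : Matrix (Fin nn) (Fin nn) ℝ) (R11 : Matrix (Fin mm) (Fin mm) ℝ)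
    (hR00 : R00.PosSemidef) (hR00sq : R00 * R00 = A00⁻¹)
    (hR11 : R11.PosSemidef) (hR11sq : R11 * R11 = A11⁻¹)
    (S00 : Matrix (Fin nn) (Fin nn) ℝ) (S11 : Matrix (Fin mm) (Fin mm) ℝ)
    (hS00 : S00.PosSemidef) (hS00sq : S00 * S00 = 1 - NormedSpace.exp (-τ • A00))
    (hS11 : S11.PosSemidef) (hS11sq : S11 * S11 = 1 - NormedSpace.exp (-τ • A11))
    -- the spectral-norm condition `‖A₀₀^{-1/2} A₀₁ A₁₁^{-1/2}‖₂ ≤ 1`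
    (hX1 : matrixSpectralNorm (R00 * A01 * R11) ≤ 1) :
    matrixSpectralNorm
      (Matrix.fromBlocks
        (NormedSpace.exp (-τ • A00)
          + (R11 * A01ᵀ * R00 * S00)ᵀ * (1 - NormedSpace.exp (-τ • A11))
              * (R11 * A01ᵀ * R00 * S00))
        (-((R11 * A01ᵀ * R00 * S00)ᵀ * S11 * NormedSpace.exp (-(τ / 2) • A11)))
        (-(NormedSpace.exp (-(τ / 2) • A11) * S11 * (R11 * A01ᵀ * R00 * S00)))
        (NormedSpace.exp (-τ • A11))) ≤ 1 :=
  symmetrized_splitting_propagator_norm_le_one_general A00 A11 A01 hA00 hA11 τ R00 R11 hR00 hR11 S00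
    S11 hS00 hS00sq hS11 hS11sq hX1
end
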